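/- If K is an m-semiring (K has a well-defined monus), then the period semiring has a well-defined monus: for all coalesced temporal K-elements k and k', the set of coalesced temporal K-elements k'' satisfying k ≼_T k' +_T k'' has a least element with respect to ≼_T, and this least element is k −_T k' = coal(k −_P k'). -/

import Mathlib

open scoped Classical

namespace TemporalK

variable {K : Type*}

/-- An interval over the time domain `{0, ..., N-1}`: a pair `(b, e)` with `b < e ≤ N`. -/
abbrev TInterval (N : ℕ) := {I : Fin (N + 1) × Fin (N + 1) // I.1 < I.2}

/-- A temporal `K`-element: a function assigning to each interval an element of `K`. -/
abbrev TempEl (N : ℕ) (K : Type*) := TInterval N → K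

/-- The interval `I = (b, e)` contains the time point `T` iff `b ≤ T < e`. -/
def Contains {N : ℕ} (I : TInterval N) (T : ℕ) : Prop :=
  (I.val.1 : ℕ) ≤ T ∧ T < (I.val.2 : ℕ)

/-- The timeslice of `𝒯` at time point `T`: the sum of `𝒯 I` over all intervals `I`
containing `T`. -/
noncomputable def slice {N : ℕ} [CommSemiring K] (𝒯 : TempEl N K) (T : ℕ) : K :=
  ∑ I ∈ Finset.univ.filter (fun I : TInterval N => Contains I T), 𝒯 I

/-- `T` is an (annotation) changepoint of `𝒯` iff `T = 0` or the timeslices at `T - 1`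
and `T` differ. -/
def Changepoint {N : ℕ} [CommSemiring K] (𝒯 : TempEl N K) (T : ℕ) : Prop :=
  T = 0 ∨ slice 𝒯 (T - 1) ≠ slice 𝒯 T

/-- `I = (b, e)` is a changepoint interval of `𝒯` iff `b` is a changepoint, `e` is a
changepoint or equals `N`, and no time point strictly between `b` and `e` is a changepoint. -/
def CPInterval {N : ℕ} [CommSemiring K] (𝒯 : TempEl N K) (I : TInterval N) : Prop :=
  Changepoint 𝒯 (I.val.1 : ℕ) ∧
    (Changepoint 𝒯 (I.val.2 : ℕ) ∨ (I.val.2 : ℕ) = N) ∧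
    ∀ T : ℕ, (I.val.1 : ℕ) < T → T < (I.val.2 : ℕ) → ¬ Changepoint 𝒯 T

/-- `K`-coalescing: maps changepoint intervals `(b, e)` to the timeslice at `b` and all
other intervals to `0`. -/
noncomputable def coal {N : ℕ} [CommSemiring K] (𝒯 : TempEl N K) : TempEl N K :=
  fun I => if CPInterval 𝒯 I then slice 𝒯 (I.val.1 : ℕ) else 0

/-- Snapshot equivalence: equal timeslices at every time point. -/
def SnapEq {N : ℕ} [CommSemiring K] (k k' : TempEl N K) : Prop :=
  ∀ T : ℕ, T < N → slice k T = slice k' T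

/-- A temporal `K`-element is coalesced iff it is the `K`-coalescing of some
temporal `K`-element. -/
def Coalesced {N : ℕ} [CommSemiring K] (k : TempEl N K) : Prop :=
  ∃ 𝒯 : TempEl N K, k = coal 𝒯

/-- Pointwise addition of temporal `K`-elements. -/
def padd {N : ℕ} [CommSemiring K] (k k' : TempEl N K) : TempEl N K :=
  fun I => k I + k' I

/-- Pointwise multiplication of temporal `K`-elements:
`(k ·_P k')(I) = Σ k(I')·k'(I'')` over all pairs `(I', I'')` whose intersection is
nonempty and equals `I`. -/
noncomputable def pmul {N : ℕ} [CommSemiring K] (k k' : TempEl N K) : TempEl N K :=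
  fun I =>
    ∑ p ∈ Finset.univ.filter (fun p : TInterval N × TInterval N =>
        max (p.1.val.1 : ℕ) (p.2.val.1 : ℕ) < min (p.1.val.2 : ℕ) (p.2.val.2 : ℕ) ∧
        (I.val.1 : ℕ) = max (p.1.val.1 : ℕ) (p.2.val.1 : ℕ) ∧
        (I.val.2 : ℕ) = min (p.1.val.2 : ℕ) (p.2.val.2 : ℕ)),
      k p.1 * k' p.2

/-- Addition of the period semiring: coalesced pointwise addition. -/
noncomputable def tadd {N : ℕ} [CommSemiring K] (k k' : TempEl N K) : TempEl N K :=
  coal (padd k k')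

/-- Multiplication of the period semiring: coalesced pointwise multiplication. -/
noncomputable def tmul {N : ℕ} [CommSemiring K] (k k' : TempEl N K) : TempEl N K :=
  coal (pmul k k')

/-- The zero of the period semiring: maps every interval to `0`. -/
def zeroT (N : ℕ) (K : Type*) [CommSemiring K] : TempEl N K := fun _ => 0

/-- The one of the period semiring: maps the interval `(0, N)` to `1` and every other
interval to `0`. -/
def oneT (N : ℕ) (K : Type*) [CommSemiring K] : TempEl N K :=
  fun I => if (I.val.1 : ℕ) = 0 ∧ (I.val.2 : ℕ) = N then 1 else 0

/-- Encoding of an annotation history `f : time points → K` as a coalesced temporal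
`K`-element: coalesce the element assigning `f T` to each singleton interval `(T, T+1)`. -/
noncomputable def enc {N : ℕ} [CommSemiring K] (f : Fin N → K) : TempEl N K :=
  coal (fun I =>
    if h : (I.val.2 : ℕ) = (I.val.1 : ℕ) + 1 then
      f ⟨(I.val.1 : ℕ), by have := I.val.2.isLt; omega⟩
    else 0)

/-- The natural preorder of the semiring `K`. -/
def nle [CommSemiring K] (a b : K) : Prop := ∃ c, a + c = b

/-- The natural preorder of the period semiring (on coalesced temporal `K`-elements). -/
def tle {N : ℕ} [CommSemiring K] (k k' : TempEl N K) : Prop :=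
  ∃ k'' : TempEl N K, Coalesced k'' ∧ tadd k k'' = k'

/-- The pointwise monus: assigns `τ_T(k) −_K τ_T(k')` to each singleton interval
`(T, T+1)` and `0` to every non-singleton interval. -/
noncomputable def pmonus {N : ℕ} [CommSemiring K] (monus : K → K → K)
    (k k' : TempEl N K) : TempEl N K :=
  fun I =>
    if (I.val.2 : ℕ) = (I.val.1 : ℕ) + 1 then
      monus (slice k (I.val.1 : ℕ)) (slice k' (I.val.1 : ℕ))
    else 0

/-- The monus of the period semiring: coalesced pointwise monus. -/
noncomputable def tmonus {N : ℕ} [CommSemiring K] (monus : K → K → K)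
    (k k' : TempEl N K) : TempEl N K :=
  coal (pmonus monus k k')

end TemporalK

open TemporalK


/-!
Coalescing preserves timeslices, and a coalesced temporal element is determined by its timeslices
(its changepoint intervals are read off from them). Hence `k ≼_T k'` for coalesced `k'` holds iff
`τ_T(k) ≼_K τ_T(k')` at every time point, `+_T` adds timeslices, and `k −_T k'` has timeslices
`τ_T(k) −_K τ_T(k')`. The two defining properties of the monus of `K` thus transfer to the period
semiring one time point at a time.
-/

namespace TemporalK

variable {K : Type*} [CommSemiring K] {N : ℕ}

def singletons (g : ℕ → K) : TempEl N K :=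
  fun I => if (I.val.2 : ℕ) = (I.val.1 : ℕ) + 1 then g (I.val.1 : ℕ) else 0

lemma slice_eq_zero_of_le (𝒯 : TempEl N K) {T : ℕ} (hT : N ≤ T) : slice 𝒯 T = 0 := by
  refine Finset.sum_eq_zero fun I hI => absurd (Finset.mem_filter.1 hI).2.2 ?_
  have := I.val.2.isLt
  omega

lemma slice_eq_single (𝒯 : TempEl N K) {T : ℕ} (I₀ : TInterval N) (hI₀ : Contains I₀ T)
    (h : ∀ J, Contains J T → J ≠ I₀ → 𝒯 J = 0) : slice 𝒯 T = 𝒯 I₀ :=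
  Finset.sum_eq_single_of_mem I₀ (by simpa using hI₀)
    fun J hJ hne => h J (Finset.mem_filter.1 hJ).2 hne

lemma slice_eq_of_forall_not_changepoint (𝒯 : TempEl N K) {b T : ℕ} (hbT : b ≤ T)
    (h : ∀ T', b < T' → T' ≤ T → ¬ Changepoint 𝒯 T') : slice 𝒯 b = slice 𝒯 T := by
  induction T, hbT using Nat.le_induction with
  | base => rfl
  | succ n hbn ih =>
    rw [ih fun T' h1 h2 => h T' h1 (by omega)]
    by_contra hne
    exact h (n + 1) (by omega) le_rfl (Or.inr hne)

lemma CPInterval.slice_eq_of_contains {𝒯 : TempEl N K} {I : TInterval N} (hI : CPInterval 𝒯 I)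
    {T : ℕ} (hT : Contains I T) : slice 𝒯 (I.val.1 : ℕ) = slice 𝒯 T :=
  slice_eq_of_forall_not_changepoint 𝒯 hT.1 fun T' h1 h2 => hI.2.2 T' h1 (by have := hT.2; omega)

lemma CPInterval.eq_of_contains {𝒯 : TempEl N K} {I J : TInterval N} (hI : CPInterval 𝒯 I)
    (hJ : CPInterval 𝒯 J) {T : ℕ} (hIT : Contains I T) (hJT : Contains J T) : I = J := by
  obtain ⟨hIb, hIe, hInc⟩ := hI
  obtain ⟨hJb, hJe, hJnc⟩ := hJ
  have hIN := I.val.2.isLt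
  have hJN := J.val.2.isLt
  have hb : (I.val.1 : ℕ) = J.val.1 := by
    rcases lt_trichotomy (I.val.1 : ℕ) J.val.1 with h | h | h
    · exact absurd hJb (hInc _ h (by have := hJT.1; have := hIT.2; omega))
    · exact h
    · exact absurd hIb (hJnc _ h (by have := hIT.1; have := hJT.2; omega))
  have he : (I.val.2 : ℕ) = J.val.2 := by
    rcases lt_trichotomy (I.val.2 : ℕ) J.val.2 with h | h | h
    · rcases hIe with hc | hc
      · exact absurd hc (hJnc _ (by have := hIT.2; omega) h)
      · omega
    · exact h
    · rcases hJe with hc | hc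
      · exact absurd hc (hInc _ (by have := hJT.2; omega) h)
      · omega
  exact Subtype.ext (Prod.ext (Fin.ext hb) (Fin.ext he))

/-- The interval from the last changepoint `≤ T` to the first changepoint (or `N`) `> T`. -/
lemma exists_cpInterval_contains (𝒯 : TempEl N K) {T : ℕ} (hT : T < N) :
    ∃ I, CPInterval 𝒯 I ∧ Contains I T := by
  set b := Nat.findGreatest (Changepoint 𝒯) T
  have hex : ∃ e, T < e ∧ (Changepoint 𝒯 e ∨ e = N) := ⟨N, hT, Or.inr rfl⟩
  set e := Nat.find hex
  have hbT : b ≤ T := Nat.findGreatest_le T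
  have hTe : T < e := (Nat.find_spec hex).1
  have heN : e ≤ N := Nat.find_le ⟨hT, Or.inr rfl⟩
  refine ⟨⟨(⟨b, by omega⟩, ⟨e, by omega⟩), Fin.mk_lt_mk.2 (by omega)⟩,
    ⟨Nat.findGreatest_spec (Nat.zero_le T) (Or.inl rfl), (Nat.find_spec hex).2, ?_⟩, hbT, hTe⟩
  intro T' hbT' hT'e hc
  rcases le_or_gt T' T with h | h
  · exact Nat.findGreatest_is_greatest hbT' h hc
  · exact Nat.find_min hex hT'e ⟨h, Or.inl hc⟩

lemma slice_coal (𝒯 : TempEl N K) (T : ℕ) : slice (coal 𝒯) T = slice 𝒯 T := by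
  rcases lt_or_ge T N with hT | hT
  · obtain ⟨I, hI, hIT⟩ := exists_cpInterval_contains 𝒯 hT
    rw [slice_eq_single (coal 𝒯) I hIT fun J hJT hne =>
      if_neg fun hJ => hne (CPInterval.eq_of_contains hJ hI hJT hIT),
      coal, if_pos hI, hI.slice_eq_of_contains hIT]
  · rw [slice_eq_zero_of_le _ hT, slice_eq_zero_of_le _ hT]

lemma coal_congr {𝒯 𝒯' : TempEl N K} (h : ∀ T, slice 𝒯 T = slice 𝒯' T) :
    coal 𝒯 = coal 𝒯' := by
  have hcp : ∀ I, CPInterval 𝒯 I ↔ CPInterval 𝒯' I := fun I => by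
    simp only [CPInterval, Changepoint, h]
  funext I
  exact if_congr (hcp I) (h _) rfl

lemma Coalesced.coal_eq {k : TempEl N K} (hk : Coalesced k) : coal k = k := by
  obtain ⟨𝒯, rfl⟩ := hk
  exact coal_congr (slice_coal 𝒯)

lemma Coalesced.ext {k k' : TempEl N K} (hk : Coalesced k) (hk' : Coalesced k')
    (h : ∀ T, T < N → slice k T = slice k' T) : k = k' := by
  rw [← hk.coal_eq, ← hk'.coal_eq]
  refine coal_congr fun T => ?_
  rcases lt_or_ge T N with hT | hT
  · exact h T hT
  · rw [slice_eq_zero_of_le _ hT, slice_eq_zero_of_le _ hT]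

lemma slice_tadd (k k' : TempEl N K) (T : ℕ) :
    slice (tadd k k') T = slice k T + slice k' T := by
  rw [tadd, slice_coal]
  exact Finset.sum_add_distrib

lemma slice_singletons (g : ℕ → K) {T : ℕ} (hT : T < N) :
    slice (singletons g : TempEl N K) T = g T := by
  let I₀ : TInterval N := ⟨(⟨T, by omega⟩, ⟨T + 1, by omega⟩), Fin.mk_lt_mk.2 T.lt_succ_self⟩
  refine (slice_eq_single (singletons g) (T := T) I₀ ⟨le_rfl, T.lt_succ_self⟩ ?_).trans
    (if_pos rfl)
  rintro J ⟨hJb, hJe⟩ hne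
  exact if_neg fun hJ => hne <| Subtype.ext <|
    Prod.ext (Fin.ext (show (J.val.1 : ℕ) = T by omega)) (Fin.ext (show (J.val.2 : ℕ) = T + 1 by omega))

lemma slice_tmonus (monus : K → K → K) (k k' : TempEl N K) {T : ℕ} (hT : T < N) :
    slice (tmonus monus k k') T = monus (slice k T) (slice k' T) := by
  rw [tmonus, slice_coal]
  exact slice_singletons (fun T => monus (slice k T) (slice k' T)) hT

lemma tle.nle_slice {k k' : TempEl N K} (h : tle k k') (T : ℕ) :
    nle (slice k T) (slice k' T) := by
  obtain ⟨k'', -, rfl⟩ := h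
  exact ⟨slice k'' T, (slice_tadd k k'' T).symm⟩

lemma tle_of_forall_nle_slice {k k' : TempEl N K} (hk' : Coalesced k')
    (h : ∀ T, T < N → nle (slice k T) (slice k' T)) : tle k k' := by
  choose c hc using h
  refine ⟨coal (singletons fun T => if hT : T < N then c T hT else 0), ⟨_, rfl⟩,
    Coalesced.ext ⟨_, rfl⟩ hk' fun T hT => ?_⟩
  rw [slice_tadd, slice_coal, slice_singletons _ hT, dif_pos hT]
  exact hc T hT

end TemporalK

theorem period_semiring_monus_general {N : ℕ} {K : Type*} [CommSemiring K]
    (monus : K → K → K)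
    (hmem : ∀ a b : K, nle a (b + monus a b))
    (hleast : ∀ a b c : K, nle a (b + c) → nle (monus a b) c)
    (k k' : TempEl N K) :
    Coalesced (tmonus monus k k') ∧
    tle k (tadd k' (tmonus monus k k')) ∧
    (∀ k'' : TempEl N K, Coalesced k'' → tle k (tadd k' k'') →
        tle (tmonus monus k k') k'') := by
  refine ⟨⟨_, rfl⟩, tle_of_forall_nle_slice ⟨_, rfl⟩ fun T hT => ?_,
    fun k'' hk'' hle => tle_of_forall_nle_slice hk'' fun T hT => ?_⟩
  · rw [slice_tadd, slice_tmonus monus k k' hT]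
    exact hmem _ _
  · rw [slice_tmonus monus k k' hT]
    have hle_T := hle.nle_slice T
    rw [slice_tadd] at hle_T
    exact hleast _ _ _ hle_T

theorem period_semiring_monus {N : ℕ} (hN : 1 ≤ N) {K : Type*} [CommSemiring K]
    (hanti : ∀ a b : K, nle a b → nle b a → a = b)
    (monus : K → K → K)
    (hmem : ∀ a b : K, nle a (b + monus a b))
    (hleast : ∀ a b c : K, nle a (b + c) → nle (monus a b) c)
    (k k' : TempEl N K) (hk : Coalesced k) (hk' : Coalesced k') :
    Coalesced (tmonus monus k k') ∧
    tle k (tadd k' (tmonus monus k k')) ∧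
    (∀ k'' : TempEl N K, Coalesced k'' → tle k (tadd k' k'') →
        tle (tmonus monus k k') k'') :=
  period_semiring_monus_general monus hmem hleast k k'
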